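/- For every real x ≥ 3, the function g₂(x) := Σ_{r=1}^∞ x^{1-2r}/((2r+1)·r·(2r-1)) satisfies 0 < g₂(x) ≤ 0.4/x. -/

import Mathlib

/-!
Writing `y = x⁻¹`, the `r`-th term is `y * (y ^ 2) ^ (r - 1) / ((2r+1) r (2r-1))`, and every
denominator is at least `3`. The series is therefore dominated by the geometric series
`y / 3 * ∑ (y ^ 2) ^ n = y / (3 (1 - y ^ 2))`, which for `y ≤ 1/3` is at most `(3/8) y < 0.4 y`.
-/

noncomputable section

/-- The term of index `r = n + 1` of the series `g₂`. -/
def g2Term (x : ℝ) (n : ℕ) : ℝ :=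
  x ^ (1 - 2 * ((n : ℤ) + 1)) /
    ((2 * ((n : ℝ) + 1) + 1) * ((n : ℝ) + 1) * (2 * ((n : ℝ) + 1) - 1))

lemma zpow_one_sub_two_mul_succ {G : Type*} [GroupWithZero G] (x : G) (n : ℕ) :
    x ^ (1 - 2 * ((n : ℤ) + 1)) = x⁻¹ * (x⁻¹ ^ 2) ^ n := by
  have h : (1 : ℤ) - 2 * ((n : ℤ) + 1) = -((1 + 2 * n : ℕ) : ℤ) := by push_cast; ring
  rw [h, zpow_neg, zpow_natCast, ← inv_pow, pow_add, pow_mul, pow_one]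

lemma three_le_g2Term_denom (n : ℕ) :
    (3 : ℝ) ≤ (2 * ((n : ℝ) + 1) + 1) * ((n : ℝ) + 1) * (2 * ((n : ℝ) + 1) - 1) := by
  have hn : (0 : ℝ) ≤ n := n.cast_nonneg
  nlinarith [mul_nonneg hn hn, mul_nonneg (mul_nonneg hn hn) hn]

lemma g2Term_pos {x : ℝ} (hx : 0 < x) (n : ℕ) : 0 < g2Term x n :=
  div_pos (zpow_pos hx _) (by linarith [three_le_g2Term_denom n])

lemma g2Term_le {x : ℝ} (hx : 0 < x) (n : ℕ) : g2Term x n ≤ x⁻¹ / 3 * (x⁻¹ ^ 2) ^ n := by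
  rw [g2Term, zpow_one_sub_two_mul_succ, div_mul_eq_mul_div]
  exact div_le_div_of_nonneg_left (by positivity) (by norm_num) (three_le_g2Term_denom n)

lemma hasSum_geometric_majorant {x : ℝ} (hx : 1 < x) :
    HasSum (fun n : ℕ => x⁻¹ / 3 * (x⁻¹ ^ 2) ^ n) (x⁻¹ / 3 * (1 - x⁻¹ ^ 2)⁻¹) := by
  have hy : x⁻¹ ^ 2 < 1 := pow_lt_one₀ (by positivity) (inv_lt_one_of_one_lt₀ hx) two_ne_zero
  exact (hasSum_geometric_of_lt_one (by positivity) hy).mul_left _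

lemma summable_g2Term {x : ℝ} (hx : 1 < x) : Summable (g2Term x) :=
  (hasSum_geometric_majorant hx).summable.of_nonneg_of_le
    (fun n => (g2Term_pos (by linarith) n).le) (g2Term_le (by linarith))

lemma tsum_g2Term_pos {x : ℝ} (hx : 1 < x) : 0 < ∑' n, g2Term x n :=
  (summable_g2Term hx).tsum_pos (fun n => (g2Term_pos (by linarith) n).le) 0
    (g2Term_pos (by linarith) 0)

lemma tsum_g2Term_le {x : ℝ} (hx : 1 < x) :
    ∑' n, g2Term x n ≤ x⁻¹ / 3 * (1 - x⁻¹ ^ 2)⁻¹ :=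
  hasSum_le (g2Term_le (by linarith)) (summable_g2Term hx).hasSum (hasSum_geometric_majorant hx)

end

theorem stmt_7 (x : ℝ) (hx : 3 ≤ x) :
    0 < (∑' n : ℕ,
        x ^ (1 - 2 * ((n : ℤ) + 1)) /
          ((2 * ((n : ℝ) + 1) + 1) * ((n : ℝ) + 1) * (2 * ((n : ℝ) + 1) - 1))) ∧
    (∑' n : ℕ,
        x ^ (1 - 2 * ((n : ℤ) + 1)) /
          ((2 * ((n : ℝ) + 1) + 1) * ((n : ℝ) + 1) * (2 * ((n : ℝ) + 1) - 1)))
      ≤ 0.4 / x := by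
  have hx1 : 1 < x := by linarith
  refine ⟨tsum_g2Term_pos hx1, (tsum_g2Term_le hx1).trans ?_⟩
  have hy : x⁻¹ ≤ 1 / 3 := by rw [inv_le_comm₀ (by linarith) (by norm_num)]; linarith
  have hy0 : 0 < x⁻¹ := by positivity
  have hsq : 8 / 9 ≤ 1 - x⁻¹ ^ 2 := by nlinarith
  calc x⁻¹ / 3 * (1 - x⁻¹ ^ 2)⁻¹ ≤ x⁻¹ / 3 * (8 / 9)⁻¹ := by gcongr
    _ ≤ 0.4 / x := by rw [div_eq_mul_inv 0.4]; nlinarith
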